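/- arXiv:2409.12770 — 2 statements merged into one kernel-verified Lean document; each statement's English description precedes it below -/
import Mathlib

section
/- R(C₄, K_{1,51}) ≥ 59, R(C₄, K_{1,52}) ≥ 60, and R(C₄, K_{1,53}) ≥ 61. -/
/-- `G` contains a subgraph isomorphic to `H`, i.e. there is an injective map of the
vertices of `H` into the vertices of `G` preserving adjacency. -/
def SimpleGraph.ContainsCopy {V W : Type*} (G : SimpleGraph V) (H : SimpleGraph W) : Prop :=
  ∃ f : W ↪ V, ∀ ⦃a b : W⦄, H.Adj a b → G.Adj (f a) (f b)

/-- The Ramsey number `R(H₁, H₂)`: the least `N` such that every simple graph `G` on `N`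
vertices contains a subgraph isomorphic to `H₁`, or its complement contains a subgraph
isomorphic to `H₂`. -/
noncomputable def ramseyNumber {V W : Type*} (H₁ : SimpleGraph V) (H₂ : SimpleGraph W) : ℕ :=
  sInf {N : ℕ | ∀ G : SimpleGraph (Fin N),
    G.ContainsCopy H₁ ∨ Gᶜ.ContainsCopy H₂}

/-- The star `K_{1,n}` on `n + 1` vertices. -/
def starGraph (n : ℕ) : SimpleGraph (Fin 1 ⊕ Fin n) := completeBipartiteGraph (Fin 1) (Fin n)

/-!
The lower bounds are witnessed by explicit graphs on `N = 58, 59, 60` vertices that contain no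
`C₄` and whose complements have maximum degree below `n = 51, 52, 53`. A graph is `C₄`-free iff
any two distinct vertices have at most one common neighbour.

Since `ramseyNumber` is an infimum (and `sInf ∅ = 0`), the lower bound also needs some order that
arrows `(C₄, K_{1,n})`: `2n + 2` does, because two vertices of degree at least `n + 2` in a graph
on `2n + 2` vertices share two neighbours.
-/

open Finset

namespace SimpleGraph

variable {V W : Type*}

theorem containsCopy_iff_isContained {G : SimpleGraph V} {H : SimpleGraph W} :
    G.ContainsCopy H ↔ H ⊑ G :=
  isContained_iff_exists_le_comap.symm

def cycleGraphFourIso : cycleGraph 4 ≃g completeBipartiteGraph (Fin 2) (Fin 2) where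
  toFun := ![.inl 0, .inr 0, .inl 1, .inr 1]
  invFun := Sum.elim ![0, 2] ![1, 3]
  left_inv := by decide
  right_inv := by decide
  map_rel_iff' {a b} := by fin_cases a <;> fin_cases b <;> simp [cycleGraph_adj] <;> decide

theorem cycleGraph_four_isContained_iff {G : SimpleGraph V} :
    cycleGraph 4 ⊑ G ↔
      ∃ u v x y, u ≠ v ∧ x ≠ y ∧ G.Adj u x ∧ G.Adj u y ∧ G.Adj v x ∧ G.Adj v y := by
  classical
  rw [isContained_congr_left cycleGraphFourIso, completeBipartiteGraph_isContained_iff]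
  simp only [Fintype.card_fin, card_eq_two, IsCompleteBetween]
  constructor
  · rintro ⟨_, _, ⟨u, v, huv, rfl⟩, ⟨x, y, hxy, rfl⟩, h⟩
    exact ⟨u, v, x, y, huv, hxy, h (by simp) (by simp), h (by simp) (by simp),
      h (by simp) (by simp), h (by simp) (by simp)⟩
  · rintro ⟨u, v, x, y, huv, hxy, hux, huy, hvx, hvy⟩
    refine ⟨_, _, ⟨u, v, huv, rfl⟩, ⟨x, y, hxy, rfl⟩, ?_⟩
    simp only [coe_insert, coe_singleton, Set.mem_insert_iff, Set.mem_singleton_iff]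
    rintro _ (rfl | rfl) _ (rfl | rfl) <;> assumption

theorem cycleGraph_four_isContained_of_card_add_two_le [Fintype V] [DecidableEq V]
    {G : SimpleGraph V} [DecidableRel G.Adj] {u v : V} (huv : u ≠ v)
    (h : Fintype.card V + 2 ≤ G.degree u + G.degree v) : cycleGraph 4 ⊑ G := by
  have hcommon : 1 < #(G.neighborFinset u ∩ G.neighborFinset v) := by
    have := card_union_add_card_inter (G.neighborFinset u) (G.neighborFinset v)
    have := card_le_univ (G.neighborFinset u ∪ G.neighborFinset v)
    simp only [card_neighborFinset_eq_degree] at *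
    omega
  obtain ⟨x, hx, y, hy, hxy⟩ := one_lt_card.1 hcommon
  simp only [mem_inter, mem_neighborFinset] at hx hy
  exact cycleGraph_four_isContained_iff.2 ⟨u, v, x, y, huv, hxy, hx.1, hy.1, hx.2, hy.2⟩

end SimpleGraph

open scoped SimpleGraph

theorem starGraph_isContained_iff {V : Type*} [Fintype V] {G : SimpleGraph V}
    [DecidableRel G.Adj] {n : ℕ} : starGraph n ⊑ G ↔ ∃ v, n ≤ G.degree v := by
  classical
  rw [starGraph, SimpleGraph.completeBipartiteGraph_isContained_iff]
  simp only [Fintype.card_fin, card_eq_one, SimpleGraph.IsCompleteBetween]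
  constructor
  · rintro ⟨_, t, ⟨v, rfl⟩, rfl, h⟩
    refine ⟨v, card_le_card fun w hw => ?_⟩
    simpa using h (by simp) hw
  · rintro ⟨v, hv⟩
    obtain ⟨t, ht, rfl⟩ := exists_subset_card_eq hv
    refine ⟨_, t, ⟨v, rfl⟩, rfl, ?_⟩
    simp only [coe_singleton, Set.mem_singleton_iff]
    rintro _ rfl w hw
    simpa using ht hw

/-- `Arrows H₁ H₂ N` is the arrow relation `N → (H₁, H₂)` of Ramsey theory. -/
def Arrows {V W : Type*} (H₁ : SimpleGraph V) (H₂ : SimpleGraph W) (N : ℕ) : Prop :=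
  ∀ G : SimpleGraph (Fin N), H₁ ⊑ G ∨ H₂ ⊑ Gᶜ

section Arrows

variable {V W : Type*} {H₁ : SimpleGraph V} {H₂ : SimpleGraph W}

theorem ramseyNumber_eq_sInf_arrows : ramseyNumber H₁ H₂ = sInf {N | Arrows H₁ H₂ N} := by
  simp only [ramseyNumber, SimpleGraph.containsCopy_iff_isContained, Arrows]

theorem Arrows.mono {N M : ℕ} (hNM : N ≤ M) (h : Arrows H₁ H₂ N) : Arrows H₁ H₂ M := by
  intro G
  let f := Fin.castLEEmb hNM
  have hcompl : (G.comap f)ᶜ = Gᶜ.comap f := by ext; simp [f.injective.ne_iff]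
  refine (h (G.comap f)).imp (·.trans (SimpleGraph.Embedding.comap f G).isContained) ?_
  rw [hcompl]
  exact (·.trans (SimpleGraph.Embedding.comap f Gᶜ).isContained)

theorem lt_ramseyNumber {N M : ℕ} (hM : Arrows H₁ H₂ M) (G : SimpleGraph (Fin N))
    (h₁ : ¬H₁ ⊑ G) (h₂ : ¬H₂ ⊑ Gᶜ) : N < ramseyNumber H₁ H₂ := by
  rw [ramseyNumber_eq_sInf_arrows]
  by_contra! hle
  exact (Arrows.mono hle (Nat.sInf_mem (s := {N | Arrows H₁ H₂ N}) ⟨M, hM⟩) G).elim h₁ h₂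

end Arrows

theorem arrows_cycleGraph_four_starGraph (n : ℕ) :
    Arrows (SimpleGraph.cycleGraph 4) (starGraph n) (2 * n + 2) := by
  classical
  intro G
  rw [starGraph_isContained_iff]
  by_cases hstar : ∃ v, n ≤ Gᶜ.degree v
  · exact .inr hstar
  push Not at hstar
  have hdeg (v) : n + 2 ≤ G.degree v := by
    have := G.degree_compl v
    have := G.degree_lt_card_verts v
    simp only [Fintype.card_fin] at *
    specialize hstar v
    omega
  refine .inl (SimpleGraph.cycleGraph_four_isContained_of_card_add_two_le (u := 0) (v := 1)
    (by simp) ?_)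
  have := hdeg 0
  have := hdeg 1
  simp only [Fintype.card_fin]
  omega

theorem lt_ramseyNumber_cycleGraph_four_starGraph {N n : ℕ} (G : SimpleGraph (Fin N))
    [DecidableRel G.Adj] (hG : ¬SimpleGraph.cycleGraph 4 ⊑ G) (hdeg : ∀ v, Gᶜ.degree v < n) :
    N < ramseyNumber (SimpleGraph.cycleGraph 4) (starGraph n) := by
  refine lt_ramseyNumber (arrows_cycleGraph_four_starGraph n) G hG ?_
  rw [starGraph_isContained_iff]
  push Not
  exact hdeg

theorem Nat.eq_of_testBit_of_isPowerOfTwo {x i j : ℕ} (hx : x.isPowerOfTwo)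
    (hi : x.testBit i) (hj : x.testBit j) : i = j := by
  obtain ⟨k, rfl⟩ := hx
  rw [Nat.testBit_two_pow, decide_eq_true_eq] at hi hj
  exact hi.symm.trans hj

def ofBitRows (rows : List ℕ) (N : ℕ) : SimpleGraph (Fin N) where
  Adj u v := u ≠ v ∧ (rows.getD u 0).testBit v ∧ (rows.getD v 0).testBit u
  symm := ⟨fun _ _ h => ⟨h.1.symm, h.2.2, h.2.1⟩⟩
  loopless := ⟨fun _ h => h.1 rfl⟩

instance (rows : List ℕ) (N : ℕ) : DecidableRel (ofBitRows rows N).Adj :=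
  fun u v => inferInstanceAs (Decidable (u ≠ v ∧ _ ∧ _))

/- The conjunction of rows `u` and `v` has the common neighbours of `u` and `v` among its bits, so
the hypothesis says that it has at most one bit set. -/
theorem not_cycleGraph_four_isContained_ofBitRows {rows : List ℕ} {N : ℕ}
    (h : ∀ u v : Fin N, u ≠ v →
      (rows.getD u 0 &&& rows.getD v 0) = 0 ∨ (rows.getD u 0 &&& rows.getD v 0).isPowerOfTwo) :
    ¬SimpleGraph.cycleGraph 4 ⊑ ofBitRows rows N := by
  rw [SimpleGraph.cycleGraph_four_isContained_iff]
  rintro ⟨u, v, x, y, huv, hxy, hux, huy, hvx, hvy⟩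
  have hcommon {z : Fin N} (hu : (ofBitRows rows N).Adj u z) (hv : (ofBitRows rows N).Adj v z) :
      (rows.getD u 0 &&& rows.getD v 0).testBit z := by
    rw [Nat.testBit_and, hu.2.1, hv.2.1]
    rfl
  rcases h u v huv with hzero | hpow
  · have hx := hcommon hux hvx
    rw [hzero, Nat.zero_testBit] at hx
    exact Bool.false_ne_true hx
  · exact hxy (Fin.ext (Nat.eq_of_testBit_of_isPowerOfTwo hpow (hcommon hux hvx)
      (hcommon huy hvy)))

theorem lt_ramseyNumber_of_bitRows {rows : List ℕ} {N n : ℕ}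
    (hC₄ : ∀ u v : Fin N, u ≠ v →
      (rows.getD u 0 &&& rows.getD v 0) = 0 ∨ (rows.getD u 0 &&& rows.getD v 0).isPowerOfTwo)
    (hdeg : ∀ v, #{w | (ofBitRows rows N)ᶜ.Adj v w} < n) :
    N < ramseyNumber (SimpleGraph.cycleGraph 4) (starGraph n) := by
  refine lt_ramseyNumber_cycleGraph_four_starGraph _
    (not_cycleGraph_four_isContained_ofBitRows hC₄) fun v => ?_
  rw [← SimpleGraph.card_neighborFinset_eq_degree, SimpleGraph.neighborFinset_eq_filter]
  exact hdeg v

def rows58 : List ℕ :=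
  [16256, 148636448878247936, 73253880406212640, 18581884049031232, 11294192173187072,
    36029933042040836, 290547038224392, 282583145922561, 36046527726094337, 76596380201652225,
    144185836026601473, 565166291845377, 10137531838431745, 20275063676732417, 72066527706218626,
    13513272854579232, 2269430654963776, 36345473849623568, 140187732541440, 22518569375957124,
    1126460433631234, 36592572142997504, 2252487293706272, 9007818804298000, 144397212946793024,
    72058178221769736, 9165529499598984, 18225539118549008, 145153792806914, 175990649135108,
    72199706192642368, 36178343486292512, 144258264174494720, 2256474886635664, 571746315536388,
    1168398946336, 283708904972290, 1161088578109704, 4573978037355584, 66846720,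
    144713357835108512, 72343540075890688, 18016606391373832, 9007218582380608, 38350965644263682,
    4504837115216400, 1143767105274884, 8522825728, 37156964685447360, 146368104583137288,
    9359180415635460, 72638144771596304, 18049857760035330, 145249884151255056, 40536794827595784,
    18313467821949216, 2253999944253956, 9571253031535618]

def rows59 : List ℕ :=
  [9078122117337216, 290499836873023616, 35202090008720, 72343467229184160, 148619922656739460,
    36178605495058568, 19142637030277248, 127, 18156244234674176, 292769437210118144,
    36312488469348352, 72629409349173760, 516097, 4512395993026818, 2254273857459216,
    36609375666704416, 72058830990612544, 289360683248652292, 18331127651504136, 69818988363777,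
    74309962934812932, 36029356472075266, 144397488223166528, 18577898235512848, 288371801111789600,
    1126484158710280, 8936830510563329, 88098939617544, 72163181530719232, 36099234621163524,
    144194363652833296, 288302944993968704, 567453553048682497, 9574823208550656, 9297607764476932,
    10134267694710800, 9150170663225346, 13528408399085632, 11294192034660896, 66584577,
    288511885488750864, 145206402368576, 76563401279143944, 1125918160988192, 144713459975094274,
    18032265842655748, 4227858433, 144117455902474528, 288794442868196360, 299075828221952,
    20275028876722240, 73183768890851330, 36033332571546128, 545460846593, 37189885601513792,
    22518002970821664, 146371390500571144, 72215929085231120, 282580947698178]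

def rows60 : List ℕ :=
  [576461853963714720, 864691129529466960, 432345564764733480, 216172782382366740,
    108086391191183370, 54043195595591685, 603482350101219330, 301741175050609665,
    727331339828728320, 363665669914364160, 181832836030922880, 90916417478591040,
    45458208739295520, 22729104369647760, 11364552184823880, 5682276092411940, 2841138046205970,
    1420569023102985, 577171036814974980, 288585518407487490, 144292759203743745,
    648607131905295360, 324303565952647680, 162151782976323840, 81075891488161920,
    40537945744080960, 20268972872040480, 10134486436020240, 5067243218010120, 2533621609005060,
    1266809730761730, 633405402251265, 576777455004549120, 288388727502274560, 144194363751137280,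
    72097181875568640, 36048590937784320, 18024295468892160, 9012147734446080, 4506073867223040,
    2251937421983745, 1126518466805760, 563259233402880, 281629616701440, 140814808350720,
    70407404175360, 35203702087680, 17601851043840, 8800925521920, 4400462760960, 2200231380480,
    1100115690240, 550057845120, 275028922560, 137514461280, 68757230640, 34378615320, 17189307660,
    8594653830, 4297326915]

theorem lt_ramseyNumber_cycleGraph_four_starGraph_51 :
    58 < ramseyNumber (SimpleGraph.cycleGraph 4) (starGraph 51) :=
  lt_ramseyNumber_of_bitRows (rows := rows58) (by decide) (by decide)

theorem lt_ramseyNumber_cycleGraph_four_starGraph_52 :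
    59 < ramseyNumber (SimpleGraph.cycleGraph 4) (starGraph 52) :=
  lt_ramseyNumber_of_bitRows (rows := rows59) (by decide) (by decide)

theorem lt_ramseyNumber_cycleGraph_four_starGraph_53 :
    60 < ramseyNumber (SimpleGraph.cycleGraph 4) (starGraph 53) :=
  lt_ramseyNumber_of_bitRows (rows := rows60) (by decide) (by decide)

/-- `R(C₄, K_{1,51}) ≥ 59`, `R(C₄, K_{1,52}) ≥ 60`, and `R(C₄, K_{1,53}) ≥ 61`. -/
theorem ramsey_C4_star_51_52_53_lower :
    59 ≤ ramseyNumber (SimpleGraph.cycleGraph 4) (starGraph 51)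
      ∧ 60 ≤ ramseyNumber (SimpleGraph.cycleGraph 4) (starGraph 52)
      ∧ 61 ≤ ramseyNumber (SimpleGraph.cycleGraph 4) (starGraph 53) :=
  ⟨lt_ramseyNumber_cycleGraph_four_starGraph_51, lt_ramseyNumber_cycleGraph_four_starGraph_52,
    lt_ramseyNumber_cycleGraph_four_starGraph_53⟩
end

section
/- R(C₄, K_{1,69}) ≥ 78 and R(C₄, K_{1,71}) ≥ 80. -/
/-!
Over a finite field `𝔽_q` join `u ≠ v` in `𝔽_q²` when `u₂ + v₂ = u₁ v₁` (the affine part of the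
Erdős–Rényi polarity graph). If `b` and `d` are both adjacent to `a` and to `c`, the four incidence
equations give `(a₁ - c₁)(b₁ - d₁) = 0`, which forces `a = c` or `b = d`; so the graph is `C₄`-free.
The neighbours of `u` are the `q` points `(c, u₁ c - u₂)` other than `u` itself. Now delete `k`
points `(0, y)` with `-2y` a nonsquare. This line through the neighbours of `u` meets the axis
`x = 0` only in `(0, -u₂)`, and if `u` lies on it then `2u₂ = u₁²`, so that point was not deleted.
Hence every remaining vertex keeps degree at least `q - 1`, and the complement of the graph on the
`q² - k` remaining vertices has maximum degree at most `q² - k - q`. For `q = 9` this is `68` when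
`k = 4` and `70` when `k = 2`.
-/

open Finset

namespace SimpleGraph

variable {V W X : Type*}

theorem ContainsCopy.trans {G : SimpleGraph V} {H : SimpleGraph W} {K : SimpleGraph X}
    (hGH : G.ContainsCopy H) (hKG : K.ContainsCopy G) : K.ContainsCopy H := by
  obtain ⟨f, hf⟩ := hGH
  obtain ⟨g, hg⟩ := hKG
  exact ⟨f.trans g, fun _ _ h => hg (hf h)⟩

theorem containsCopy_comap (G : SimpleGraph W) (f : V ↪ W) : G.ContainsCopy (G.comap f) :=
  ⟨f, fun _ _ h => h⟩

theorem compl_containsCopy_compl_comap (G : SimpleGraph W) (f : V ↪ W) :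
    Gᶜ.ContainsCopy (G.comap f)ᶜ :=
  ⟨f, fun _ _ h => ⟨f.injective.ne h.1, h.2⟩⟩

theorem containsCopy_starGraph_iff [Fintype V] (G : SimpleGraph V) [DecidableRel G.Adj]
    {n : ℕ} : G.ContainsCopy (_root_.starGraph n) ↔ ∃ v, n ≤ G.degree v := by
  constructor
  · rintro ⟨f, hf⟩
    refine ⟨f (.inl 0), ?_⟩
    calc n = #(univ.map (Function.Embedding.inr.trans f)) := by simp
      _ ≤ G.degree (f (.inl 0)) := card_le_card fun w hw => by
        obtain ⟨i, -, rfl⟩ := mem_map.1 hw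
        exact (mem_neighborFinset ..).2 (hf (by simp [_root_.starGraph]))
  · rintro ⟨v, hv⟩
    obtain ⟨s, hs, hcard⟩ := exists_subset_card_eq hv
    let e : Fin n ≃ s := (finCongr hcard.symm).trans s.equivFin.symm
    have hadj (i : Fin n) : G.Adj v (e i) := (mem_neighborFinset ..).1 (hs (e i).2)
    refine ⟨⟨Sum.elim (fun _ => v) (fun i => e i), ?_⟩, ?_⟩
    · exact Function.Injective.sumElim (fun _ _ _ => Subsingleton.elim _ _)
        (Subtype.val_injective.comp e.injective) fun _ i => (hadj i).ne
    · rintro (a | a) (b | b) h <;> simp [_root_.starGraph] at h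
      · exact hadj b
      · exact (hadj a).symm

theorem containsCopy_cycleGraph_four_iff {G : SimpleGraph V} :
    G.ContainsCopy (cycleGraph 4) ↔
      ∃ a b c d, a ≠ c ∧ b ≠ d ∧ G.Adj a b ∧ G.Adj b c ∧ G.Adj c d ∧ G.Adj d a := by
  constructor
  · rintro ⟨f, hf⟩
    exact ⟨f 0, f 1, f 2, f 3, f.injective.ne (by decide), f.injective.ne (by decide),
      hf (by decide), hf (by decide), hf (by decide), hf (by decide)⟩
  · rintro ⟨a, b, c, d, hac, hbd, hab, hbc, hcd, hda⟩
    refine ⟨⟨![a, b, c, d], fun i j h => ?_⟩, fun i j h => ?_⟩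
    · fin_cases i <;> fin_cases j <;>
        simp_all [hab.ne, hbc.ne, hcd.ne, hda.ne, hab.ne.symm, hbc.ne.symm, hcd.ne.symm,
          hda.ne.symm, hac.symm, hbd.symm]
    · change G.Adj (![a, b, c, d] i) (![a, b, c, d] j)
      fin_cases i <;> fin_cases j <;> first
        | exact absurd h (by decide)
        | simpa using hab | simpa using hbc | simpa using hcd | simpa using hda
        | simpa using hab.symm | simpa using hbc.symm | simpa using hcd.symm | simpa using hda.symm

theorem containsCopy_cycleGraph_four_or_compl_containsCopy_starGraph [Fintype V]
    (G : SimpleGraph V) {n : ℕ} (hV : 2 * n + 2 ≤ Fintype.card V) :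
    G.ContainsCopy (cycleGraph 4) ∨ Gᶜ.ContainsCopy (_root_.starGraph n) := by
  classical
  rw [or_iff_not_imp_right, containsCopy_starGraph_iff, containsCopy_cycleGraph_four_iff]
  push Not
  intro hdeg
  obtain ⟨a, b, hab⟩ := Fintype.exists_pair_of_one_lt_card (α := V) (by omega)
  have hcommon : 1 < #(G.neighborFinset a ∩ G.neighborFinset b) := by
    have hunion := card_union_add_card_inter (G.neighborFinset a) (G.neighborFinset b)
    have hle := card_le_univ (G.neighborFinset a ∪ G.neighborFinset b)
    have ha := hdeg a
    have hb := hdeg b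
    rw [degree_compl, ← card_neighborFinset_eq_degree] at ha hb
    omega
  obtain ⟨c, hc, d, hd, hcd⟩ := one_lt_card.1 hcommon
  simp only [mem_inter, mem_neighborFinset] at hc hd
  exact ⟨a, c, b, d, hab, hcd, hc.1, hc.2.symm, hd.2, hd.1.symm⟩

end SimpleGraph

theorem card_lt_ramseyNumber {V W X : Type*} [Fintype X] {H₁ : SimpleGraph V}
    {H₂ : SimpleGraph W}
    (hfin : ∃ N, ∀ G : SimpleGraph (Fin N), G.ContainsCopy H₁ ∨ Gᶜ.ContainsCopy H₂)
    (G : SimpleGraph X) (h₁ : ¬G.ContainsCopy H₁) (h₂ : ¬Gᶜ.ContainsCopy H₂) :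
    Fintype.card X < ramseyNumber H₁ H₂ := by
  refine le_csInf hfin fun N hN => ?_
  by_contra! hle
  let f : Fin N ↪ X := (Fin.castLEEmb (by omega)).trans (Fintype.equivFin X).symm.toEmbedding
  rcases hN (G.comap f) with h | h
  · exact h₁ (h.trans (G.containsCopy_comap f))
  · exact h₂ (h.trans (G.compl_containsCopy_compl_comap f))

theorem FiniteField.card_div_two_le_card_not_isSquare {F : Type*} [Field F] [Fintype F]
    [DecidableEq F] (hF : ringChar F ≠ 2) :
    Fintype.card F / 2 ≤ #{a : F | ¬IsSquare a} := by
  have hsq : #{a : F | IsSquare a} ≤ Fintype.card F / 2 + 1 := by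
    calc #{a : F | IsSquare a}
        ≤ #(insert 0 (Polynomial.nthRootsFinset (Fintype.card F / 2) (1 : F))) := by
          refine card_le_card fun a ha => ?_
          rw [mem_insert, Polynomial.mem_nthRootsFinset (Nat.div_pos Fintype.one_lt_card two_pos)]
          exact or_iff_not_imp_left.2 fun h0 =>
            (FiniteField.isSquare_iff hF h0).1 (mem_filter.1 ha).2
      _ ≤ _ := by
          refine (card_insert_le _ _).trans (Nat.add_le_add_right ?_ 1)
          rw [Polynomial.nthRootsFinset_def]
          exact (Multiset.toFinset_card_le _).trans (Polynomial.card_nthRoots _ _)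
  have hsplit := card_filter_add_card_filter_not (s := univ) fun a : F => IsSquare a
  have hodd := FiniteField.odd_card_of_char_ne_two hF
  rw [card_univ] at hsplit
  omega

theorem FiniteField.exists_finset_card_eq_not_isSquare_neg_two_mul {F : Type*} [Field F]
    [Fintype F] (hF : ringChar F ≠ 2) {k : ℕ} (hk : k ≤ Fintype.card F / 2) :
    ∃ D : Finset F, #D = k ∧ ∀ y ∈ D, ¬IsSquare (-2 * y) := by
  classical
  have h2 : (-2 : F) ≠ 0 := neg_ne_zero.2 (Ring.two_ne_zero hF)
  have hcard : k ≤ #{y : F | ¬IsSquare (-2 * y)} := by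
    refine hk.trans ((card_div_two_le_card_not_isSquare hF).trans
      (card_le_card_of_injOn (· / -2) (fun a ha => ?_) fun a _ b _ hab => ?_))
    · simpa only [mem_coe, mem_filter, mem_univ, true_and, mul_div_cancel₀ _ h2] using ha
    · simpa [h2] using hab
  obtain ⟨D, hD, hDcard⟩ := exists_subset_card_eq hcard
  exact ⟨D, hDcard, fun y hy => (mem_filter.1 (hD hy)).2⟩

def affinePolarityGraph (R : Type*) [CommRing R] : SimpleGraph (R × R) where
  Adj u v := u ≠ v ∧ u.2 + v.2 = u.1 * v.1
  symm := ⟨fun _ _ h => ⟨h.1.symm, by rw [add_comm, h.2, mul_comm]⟩⟩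
  loopless := ⟨fun _ h => h.1 rfl⟩

namespace affinePolarityGraph

variable {R : Type*} [CommRing R]

instance [DecidableEq R] : DecidableRel (affinePolarityGraph R).Adj :=
  fun u v => decidable_of_iff (u ≠ v ∧ u.2 + v.2 = u.1 * v.1) Iff.rfl

theorem eq_of_adj_of_adj [NoZeroDivisors R] {a b c d : R × R} (hac : a ≠ c)
    (hab : (affinePolarityGraph R).Adj a b) (hbc : (affinePolarityGraph R).Adj b c)
    (hcd : (affinePolarityGraph R).Adj c d) (hda : (affinePolarityGraph R).Adj d a) : b = d := by
  obtain ⟨-, hab⟩ := hab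
  obtain ⟨-, hbc⟩ := hbc
  obtain ⟨-, hcd⟩ := hcd
  obtain ⟨-, hda⟩ := hda
  have key : (a.1 - c.1) * (b.1 - d.1) = 0 := by
    linear_combination hbc + hda - hab - hcd
  rcases mul_eq_zero.1 key with h | h
  · exact absurd (Prod.ext (sub_eq_zero.1 h) (by linear_combination hab - hbc + b.1 * h)) hac
  · exact Prod.ext (sub_eq_zero.1 h) (by linear_combination hab - hda + a.1 * h)

theorem not_containsCopy_cycleGraph_four [NoZeroDivisors R] {V : Type*} (f : V ↪ R × R) :
    ¬((affinePolarityGraph R).comap f).ContainsCopy (SimpleGraph.cycleGraph 4) := by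
  rw [SimpleGraph.containsCopy_cycleGraph_four_iff]
  rintro ⟨a, b, c, d, hac, hbd, hab, hbc, hcd, hda⟩
  exact hbd (f.injective (eq_of_adj_of_adj (f.injective.ne hac) hab hbc hcd hda))

def polar (u : R × R) : R ↪ R × R :=
  ⟨fun c => (c, u.1 * c - u.2), fun _ _ h => congrArg Prod.fst h⟩

@[simp]
theorem polar_apply (u : R × R) (c : R) : polar u c = (c, u.1 * c - u.2) :=
  rfl

theorem adj_polar {u : R × R} {c : R} (h : u ≠ polar u c) :
    (affinePolarityGraph R).Adj u (polar u c) :=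
  ⟨h, by simp⟩

variable [DecidableEq R]

theorem eq_of_polar_mem_or_eq {D : Finset R} (hD : ∀ y ∈ D, ¬IsSquare (-2 * y)) {u : R × R}
    {c c' : R} (hc : polar u c ∈ {0} ×ˢ D ∨ polar u c = u)
    (hc' : polar u c' ∈ {0} ×ˢ D ∨ polar u c' = u) : c = c' := by
  suffices key : ∀ c, polar u c ∈ {0} ×ˢ D ∨ polar u c = u → c = if -u.2 ∈ D then 0 else u.1 by
    rw [key c hc, key c' hc']
  rintro c (h | h)
  · simp only [polar_apply, mem_product, mem_singleton] at h
    obtain ⟨rfl, h⟩ := h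
    rw [if_pos (by simpa using h)]
  · simp only [polar_apply, Prod.ext_iff] at h
    obtain ⟨rfl, h⟩ := h
    split_ifs with hu
    · exact absurd ⟨u.1, by linear_combination -h⟩ (hD _ hu)
    · rfl

variable [Fintype R]

abbrev punctured (D : Finset R) : SimpleGraph ↥(({0} ×ˢ D)ᶜ : Finset (R × R)) :=
  (affinePolarityGraph R).comap (Function.Embedding.subtype _)

theorem card_sub_one_le_degree_punctured {D : Finset R}
    (hD : ∀ y ∈ D, ¬IsSquare (-2 * y)) (u : ↥(({0} ×ˢ D)ᶜ : Finset (R × R))) :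
    Fintype.card R - 1 ≤ (punctured D).degree u := by
  set bad : Finset R := {c | polar u c ∈ {0} ×ˢ D ∨ polar u c = u}
  have hbad : #bad ≤ 1 := card_le_one.2 fun c hc c' hc' =>
    eq_of_polar_mem_or_eq hD (mem_filter.1 hc).2 (mem_filter.1 hc').2
  have hsub : badᶜ.map (polar u) ⊆
      ((punctured D).neighborFinset u).map (Function.Embedding.subtype _) := by
    intro v hv
    obtain ⟨c, hc, rfl⟩ := mem_map.1 hv
    simp only [bad, mem_compl, mem_filter, mem_univ, true_and, not_or] at hc
    exact mem_map.2 ⟨⟨polar (u : R × R) c, mem_compl.2 hc.1⟩,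
      (SimpleGraph.mem_neighborFinset ..).2 (adj_polar (Ne.symm hc.2)), rfl⟩
  calc Fintype.card R - 1 ≤ #badᶜ := by rw [card_compl]; omega
    _ ≤ (punctured D).degree u := by simpa using card_le_card hsub

theorem card_sq_sub_card_lt_ramseyNumber [NoZeroDivisors R] {D : Finset R}
    (hD : ∀ y ∈ D, ¬IsSquare (-2 * y)) {n : ℕ}
    (hn : Fintype.card R ^ 2 - #D - Fintype.card R < n) :
    Fintype.card R ^ 2 - #D < ramseyNumber (SimpleGraph.cycleGraph 4) (starGraph n) := by
  have hcard : Fintype.card ↥(({0} ×ˢ D)ᶜ : Finset (R × R)) = Fintype.card R ^ 2 - #D := by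
    rw [Fintype.card_coe, card_compl, card_product, card_singleton, Fintype.card_prod, sq,
      one_mul]
  rw [← hcard]
  refine card_lt_ramseyNumber ⟨2 * n + 2, fun G =>
    G.containsCopy_cycleGraph_four_or_compl_containsCopy_starGraph (Fintype.card_fin _).ge⟩
    (punctured D) (not_containsCopy_cycleGraph_four _) ?_
  rw [SimpleGraph.containsCopy_starGraph_iff]
  push Not
  intro u
  have hdeg := card_sub_one_le_degree_punctured hD u
  have hpos := Fintype.card_pos (α := R)
  rw [SimpleGraph.degree_compl, hcard]
  omega

end affinePolarityGraph

/-- `R(C₄, K_{1,69}) ≥ 78` and `R(C₄, K_{1,71}) ≥ 80`. -/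
theorem ramsey_C4_star_69_71_lower :
    78 ≤ ramseyNumber (SimpleGraph.cycleGraph 4) (starGraph 69)
      ∧ 80 ≤ ramseyNumber (SimpleGraph.cycleGraph 4) (starGraph 71) := by
  classical
  let F := GaloisField 3 2
  let : Fintype F := Fintype.ofFinite F
  have hcard : Fintype.card F = 9 := by
    rw [Fintype.card_eq_nat_card, GaloisField.card 3 2 two_ne_zero]
    rfl
  have hchar : ringChar F ≠ 2 := by
    rw [ringChar.eq F 3]
    decide
  obtain ⟨D₄, hD₄, hsq₄⟩ :=
    FiniteField.exists_finset_card_eq_not_isSquare_neg_two_mul hchar (k := 4) (by simp [hcard])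
  obtain ⟨D₂, hD₂, hsq₂⟩ :=
    FiniteField.exists_finset_card_eq_not_isSquare_neg_two_mul hchar (k := 2) (by simp [hcard])
  have h₄ := affinePolarityGraph.card_sq_sub_card_lt_ramseyNumber hsq₄ (n := 69)
    (by simp [hcard, hD₄])
  have h₂ := affinePolarityGraph.card_sq_sub_card_lt_ramseyNumber hsq₂ (n := 71)
    (by simp [hcard, hD₂])
  rw [hcard] at h₄ h₂
  omega
end
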